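/- arXiv:1310.7872 — 4 statements merged into one kernel-verified Lean document; each statement's English description precedes it below -/
import Mathlib

section
/- Let (M^{(n)})_{n≥1} be symmetric measures on Xⁿ such that M^{(n)}(Λⁿ) ≤ C_Λⁿ · n! for all n and compact Λ. Then for all i_1,...,i_n ∈ ℕ, (1/n!) · M_{i_1,...,i_n}(Λ^{(n)}_{0̂}) ≤ i_1! ⋯ i_n! · C_Λ^{i_1+...+i_n}, where M_{i_1,...,i_n} is the measure on the off-diagonal set X^{(n)}_{0̂} obtained by restricting M^{(i_1+...+i_n)} to the diagonal stratum where the first i_1 coordinates coincide, the next i_2 coordinates coincide, etc., with the n group-values pairwise distinct, and pushing forward under the map sending each group to its common value. -/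
/-!
Let `A` be the part of the stratum lying over `Λ`. Since `M I` is invariant under permuting
coordinates, `I! · M I A = ∫ #{σ | x ∘ σ ∈ A} d(M I)`. For a fixed `x ∈ Λ^I`, a permutation `σ`
with `x ∘ σ` in the stratum is determined, up to a block-preserving permutation
(`∏ i_j!` choices), by the injective labelling of the blocks by the values of `x`, and there are at
most `n!` such labellings. Hence `I! · M I A ≤ n! ∏ i_j! · M I (Λ^I) ≤ n! ∏ i_j! · C^I · I!`, and
the pushforward in the statement gives mass at most `M I A` to `Λ^{(n)}_{0̂}`.
-/

open MeasureTheory Equiv Finset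
open scoped Nat ENNReal NNReal

open Classical in
theorem card_mul_measure_le_of_card_filter_le {ι α : Type*} [MeasurableSpace α] {μ : Measure α}
    (s : Finset ι) {T : ι → α → α} (hT : ∀ g ∈ s, MeasurePreserving (T g) μ μ)
    {A B : Set α} (hA : MeasurableSet A) (hAB : ∀ g ∈ s, T g ⁻¹' A ⊆ B) {N : ℕ}
    (hcount : ∀ x, #{g ∈ s | T g x ∈ A} ≤ N) :
    #s * μ A ≤ N * μ B := by
  have hpre : ∀ g ∈ s, MeasurableSet (T g ⁻¹' A) := fun g hg => (hT g hg).measurable hA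
  calc (#s : ℝ≥0∞) * μ A = ∑ g ∈ s, μ.restrict B (T g ⁻¹' A) := by
        rw [← nsmul_eq_mul, ← sum_const]
        refine sum_congr rfl fun g hg => ?_
        rw [Measure.restrict_apply (hpre g hg), Set.inter_eq_left.mpr (hAB g hg),
          (hT g hg).measure_preimage hA.nullMeasurableSet]
    _ = ∫⁻ x, ∑ g ∈ s, (T g ⁻¹' A).indicator 1 x ∂μ.restrict B := by
        rw [lintegral_finsetSum' _ fun g hg => (measurable_one.indicator (hpre g hg)).aemeasurable]
        exact sum_congr rfl fun g hg => (lintegral_indicator_one (hpre g hg)).symm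
    _ ≤ ∫⁻ _, (N : ℝ≥0∞) ∂μ.restrict B := lintegral_mono fun x => by
        simpa [Set.indicator_apply] using hcount x
    _ = N * μ B := by rw [lintegral_const, Measure.restrict_apply_univ]

section BlockStratum

variable {α β X : Type*}

/-- For a surjection `c` with section `rep`, this is the stratum `X_π` of the partition of `α`
into the fibres of `c`: coordinates agree exactly when they lie in the same fibre. -/
def blockStratum (c : α → β) (rep : β → α) : Set (α → X) :=
  {x | (∀ k l, c k = c l → x k = x l) ∧ Function.Injective fun j => x (rep j)}

theorem comp_rep_comp_of_mem_blockStratum {c : α → β} {rep : β → α}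
    (hrep : ∀ b, c (rep b) = b) {x : α → X} (hx : x ∈ blockStratum c rep) :
    (fun j => x (rep j)) ∘ c = x :=
  funext fun a => hx.1 _ _ (hrep (c a))

theorem measurableSet_blockStratum [MeasurableSpace X] [MeasurableEq X] [Finite α] [Finite β]
    (c : α → β) (rep : β → α) : MeasurableSet (blockStratum (X := X) c rep) := by
  simp only [blockStratum, Function.Injective]
  measurability

theorem measurableSet_setOf_forall_mem [MeasurableSpace X] [Countable α] {Λ : Set X}
    (hΛ : MeasurableSet Λ) : MeasurableSet {x : α → X | ∀ k, x k ∈ Λ} := by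
  measurability

theorem card_perm_comp_eq_le [Fintype α] [DecidableEq α] [DecidableEq X] (x z : α → X) :
    #{σ : Perm α | x ∘ σ = z} ≤ Fintype.card {τ : Perm α // z ∘ τ = z} := by
  obtain h | ⟨σ₁, hσ₁⟩ := Finset.eq_empty_or_nonempty {σ : Perm α | x ∘ σ = z}
  · simp [h]
  obtain rfl := (mem_filter.mp hσ₁).2
  rw [← Fintype.card_subtype]
  refine Fintype.card_le_of_injective (fun σ => ⟨σ₁⁻¹ * σ.1, ?_⟩) fun σ τ h => ?_
  · funext a
    simpa using congrFun σ.2 a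
  · exact Subtype.ext (mul_left_cancel (congrArg Subtype.val h))

theorem card_perm_comp_eq_comp_le [Fintype α] [DecidableEq α] [Fintype β] [DecidableEq β]
    [DecidableEq X] (c : α → β) (x : α → X) {y : β → X} (hy : Function.Injective y) :
    #{σ : Perm α | x ∘ σ = y ∘ c} ≤ ∏ b, (Fintype.card {a // c a = b})! := by
  rw [← DomMulAct.stabilizer_card]
  exact (card_perm_comp_eq_le x (y ∘ c)).trans_eq (Fintype.card_congr
    (subtypeEquivRight fun τ => hy.comp_left.eq_iff (a := c ∘ τ) (b := c)))

open Classical in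
theorem card_perm_comp_mem_blockStratum_le [Fintype α] [Fintype β] [DecidableEq β]
    {c : α → β} {rep : β → α} (hrep : ∀ b, c (rep b) = b) (x : α → X) :
    #{σ : Perm α | x ∘ σ ∈ blockStratum c rep} ≤
      (Fintype.card β)! * ∏ b, (Fintype.card {a // c a = b})! := by
  set S : Finset (Perm α) := {σ | x ∘ σ ∈ blockStratum c rep}
  obtain h | ⟨σ₀, hσ₀⟩ := S.eq_empty_or_nonempty
  · simp [h]
  set V : Finset X := univ.image fun j => x (σ₀ (rep j))
  set t : Finset (β → X) := univ.image fun e : β ↪ V => fun j => (e j : X)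
  have hmaps : ∀ σ ∈ S, (fun j => x (σ (rep j))) ∈ t := by
    intro σ hσ
    have hx : ∀ a, x a ∈ V := fun a => by
      have h := congrFun (comp_rep_comp_of_mem_blockStratum hrep (mem_filter.mp hσ₀).2)
        (σ₀⁻¹ a)
      simp only [Function.comp_apply, Perm.coe_inv, apply_symm_apply] at h
      exact h ▸ mem_image_of_mem _ (mem_univ _)
    exact mem_image.mpr ⟨⟨fun j => ⟨_, hx _⟩, fun i j h => (mem_filter.mp hσ).2.2
      (congrArg Subtype.val h)⟩, mem_univ _, rfl⟩
  have hfiber : ∀ y ∈ t, #{σ ∈ S | (fun j => x (σ (rep j))) = y} ≤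
      ∏ b, (Fintype.card {a // c a = b})! := by
    intro y hy
    obtain ⟨e, -, rfl⟩ := mem_image.mp hy
    refine le_trans (card_le_card fun σ hσ => ?_) (card_perm_comp_eq_comp_le c x
      (Subtype.val_injective.comp e.injective))
    obtain ⟨hσS, hσy⟩ := mem_filter.mp hσ
    refine mem_filter.mpr ⟨mem_univ _, ?_⟩
    rw [← comp_rep_comp_of_mem_blockStratum hrep (mem_filter.mp hσS).2]
    exact congrArg (· ∘ c) hσy
  have ht : #t ≤ (Fintype.card β)! :=
    calc #t ≤ Fintype.card (β ↪ V) := card_image_le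
      _ = (#V).descFactorial (Fintype.card β) := by simp [Fintype.card_embedding_eq]
      _ ≤ (Fintype.card β)! := by
        rw [← Nat.descFactorial_self]
        exact Nat.descFactorial_le _ (card_image_le.trans (by simp))
  calc #S ≤ (∏ b, (Fintype.card {a // c a = b})!) * #t :=
        card_le_mul_card_image_of_maps_to hmaps _ hfiber
    _ ≤ (∏ b, (Fintype.card {a // c a = b})!) * (Fintype.card β)! := Nat.mul_le_mul_left _ ht
    _ = _ := mul_comm _ _

theorem map_restrict_blockStratum_le [Fintype α] [Fintype β] [MeasurableSpace X]
    [MeasurableEq X] (μ : Measure (α → X)) {c : α → β} {rep : β → α}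
    (hrep : ∀ b, c (rep b) = b) {Λ : Set X} (hΛ : MeasurableSet Λ) :
    Measure.map (fun x : α → X => fun j => x (rep j)) (μ.restrict (blockStratum c rep))
        {y | (∀ j, y j ∈ Λ) ∧ Function.Injective y} ≤
      μ (blockStratum c rep ∩ {x | ∀ k, x k ∈ Λ}) := by
  have hproj : Measurable fun x : α → X => fun j => x (rep j) := by fun_prop
  have hT : MeasurableSet {y : β → X | (∀ j, y j ∈ Λ) ∧ Function.Injective y} := by
    simp only [Function.Injective]
    measurability
  rw [Measure.map_apply hproj hT, Measure.restrict_apply (hproj hT)]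
  refine measure_mono fun x ⟨hxΛ, hx⟩ => ⟨hx, fun k => ?_⟩
  rw [← comp_rep_comp_of_mem_blockStratum hrep hx]
  exact hxΛ.1 (c k)

theorem factorial_mul_measure_blockStratum_inter_le [Fintype α] [Fintype β] [DecidableEq β]
    [MeasurableSpace X] [MeasurableEq X] {μ : Measure (α → X)}
    (hμ : ∀ σ : Perm α, Measure.map (· ∘ σ) μ = μ)
    {c : α → β} {rep : β → α} (hrep : ∀ b, c (rep b) = b) {Λ : Set X} (hΛ : MeasurableSet Λ) :
    (Fintype.card α)! * μ (blockStratum c rep ∩ {x | ∀ k, x k ∈ Λ}) ≤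
      ((Fintype.card β)! * ∏ b, (Fintype.card {a // c a = b})! : ℕ) * μ {x | ∀ k, x k ∈ Λ} := by
  classical
  have h := card_mul_measure_le_of_card_filter_le univ (T := fun (σ : Perm α) x => x ∘ σ)
    (B := {x | ∀ k, x k ∈ Λ})
    (fun σ _ => ⟨by fun_prop, hμ σ⟩)
    ((measurableSet_blockStratum c rep).inter (measurableSet_setOf_forall_mem hΛ))
    (fun σ _ x hx k => by simpa using hx.2 (σ⁻¹ k))
    fun x => (card_le_card fun σ => by simp +contextual).trans
      (card_perm_comp_mem_blockStratum_le hrep x)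
  rwa [card_univ, Fintype.card_perm] at h

end BlockStratum

theorem stratum_measure_bound_general
    {X : Type*} [TopologicalSpace X] [PolishSpace X] [MeasurableSpace X] [BorelSpace X]
    (M : (m : ℕ) → Measure (Fin m → X))
    (hsym : ∀ (m : ℕ) (σ : Equiv.Perm (Fin m)),
      Measure.map (fun x => x ∘ σ) (M m) = M m)
    (Λ : Set X) (hΛ : IsCompact Λ) (C : ℝ≥0)
    (hC : ∀ m : ℕ, M m {x | ∀ k, x k ∈ Λ} ≤ (C : ℝ≥0∞) ^ m * (m ! : ℝ≥0∞))
    (n I : ℕ) (i : Fin n → ℕ)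
    (c : Fin I → Fin n) (rep : Fin n → Fin I)
    (hfib : ∀ j, (Finset.univ.filter fun k => c k = j).card = i j)
    (hrep : ∀ j, c (rep j) = j) :
    Measure.map (fun x : Fin I → X => fun j => x (rep j))
        ((M I).restrict {x | (∀ k l, c k = c l → x k = x l) ∧
          Function.Injective fun j => x (rep j)})
        {y : Fin n → X | (∀ j, y j ∈ Λ) ∧ Function.Injective y}
      ≤ (n ! : ℝ≥0∞) * ((∏ j, ((i j)! : ℝ≥0∞)) * (C : ℝ≥0∞) ^ I) := by
  have hΛm : MeasurableSet Λ := hΛ.isClosed.measurableSet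
  have hsymm := factorial_mul_measure_blockStratum_inter_le (hsym I) hrep hΛm
  simp only [Fintype.card_fin, Fintype.card_subtype, hfib] at hsymm
  have hI! : (I ! : ℝ≥0∞) ≠ 0 := Nat.cast_ne_zero.mpr I.factorial_ne_zero
  refine (map_restrict_blockStratum_le (M I) hrep hΛm).trans
    ((ENNReal.mul_le_mul_iff_right hI! (ENNReal.natCast_ne_top _)).mp ?_)
  calc (I ! : ℝ≥0∞) * M I (blockStratum c rep ∩ {x | ∀ k, x k ∈ Λ})
    _ ≤ (n ! * ∏ j, (i j)! : ℕ) * ((C : ℝ≥0∞) ^ I * I !) :=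
        hsymm.trans (by gcongr; exact hC I)
    _ = I ! * (n ! * ((∏ j, ((i j)! : ℝ≥0∞)) * C ^ I)) := by push_cast; ring

/-- Lemma 2.3 of the paper: if `(M m)` is a family of symmetric measures on `X^m` with
`M m (Λ^m) ≤ C_Λ^m · m!` for each compact `Λ`, then
`(1/n!) · M_{i 0, ..., i (n-1)} (Λ^{(n)}_{0̂}) ≤ i 0 ! ⋯ i (n-1)! · C_Λ^{i 0 + ... + i (n-1)}`.
Here the diagonal stratum of `X^I` (`I = ∑ i j`) is parametrized by a monotone surjection
`c : Fin I → Fin n` with fibers of cardinalities `i j` (the interval partition with consecutive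
blocks of sizes `i 0, ..., i (n-1)`) together with a section `rep`, and
`M_{i 0,...,i (n-1)}` is the pushforward under `B_π : x ↦ (x (rep 0), ..., x (rep (n-1)))` of the
restriction of `M I` to the stratum where coordinates coincide exactly within the blocks. -/
theorem stratum_measure_bound
    {X : Type*} [TopologicalSpace X] [PolishSpace X] [MeasurableSpace X] [BorelSpace X]
    (M : (m : ℕ) → Measure (Fin m → X))
    (hsym : ∀ (m : ℕ) (σ : Equiv.Perm (Fin m)),
      Measure.map (fun x => x ∘ σ) (M m) = M m)
    (Λ : Set X) (hΛ : IsCompact Λ) (C : ℝ≥0)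
    (hC : ∀ m : ℕ, M m {x | ∀ k, x k ∈ Λ} ≤ (C : ℝ≥0∞) ^ m * (m ! : ℝ≥0∞))
    (n I : ℕ) (i : Fin n → ℕ) (hi : ∀ j, 1 ≤ i j) (hI : I = ∑ j, i j)
    (c : Fin I → Fin n) (rep : Fin n → Fin I) (hmono : Monotone c)
    (hfib : ∀ j, (Finset.univ.filter fun k => c k = j).card = i j)
    (hrep : ∀ j, c (rep j) = j) :
    Measure.map (fun x : Fin I → X => fun j => x (rep j))
        ((M I).restrict {x | (∀ k l, c k = c l → x k = x l) ∧
          Function.Injective fun j => x (rep j)})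
        {y : Fin n → X | (∀ j, y j ∈ Λ) ∧ Function.Injective y}
      ≤ (n ! : ℝ≥0∞) * ((∏ j, ((i j)! : ℝ≥0∞)) * (C : ℝ≥0∞) ^ I) :=
  stratum_measure_bound_general M hsym Λ hΛ C hC n I i c rep hfib hrep
end

section
/- Let X be a locally compact Polish space and η = ∑_i s_i δ_{x_i} a discrete Radon measure on X with s_i > 0 and distinct atoms x_i. Then for any symmetric nonnegative measurable function f on Xⁿ vanishing outside the off-diagonal set and any exponents i_1,...,i_n ∈ ℕ, ⟨η^{⊗(i_1+...+i_n)}, R_{i_1,...,i_n} g⟩ = n! ∑_{{(x_1,s_1),...,(x_n,s_n)} ⊂ E(η)} g(x_1,...,x_n) s_1^{i_1} ⋯ s_n^{i_n}, where R_{i_1,...,i_n} g(y_1,...,y_I) := g(y_1, y_{i_1+1}, ..., y_{i_1+...+i_{n-1}+1}) · 1[first i_1 coordinates equal, next i_2 coordinates equal, ...], I = i_1+...+i_n, and E(η) = {(x_i, s_i)} is the set of atom-weight pairs. -/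
open MeasureTheory
open scoped Nat ENNReal

/-!
Write `η = ∑ₐ sₐ δ_{xₐ}`. Then `η^{⊗I}` is the discrete measure giving mass `∏ₖ s_{b k}` to the
point `x ∘ b` for every index tuple `b : Fin I → ι`, so the pairing is a sum over such tuples.
Since the atoms are distinct, `x ∘ b` is constant on the blocks of `c` exactly when `b = a ∘ c`
for some `a : Fin n → ι`, and then the block `j` contributes `s_{a j} ^ i j`. The tuples `a` that
are not injective drop out because `g` vanishes off the diagonal.
-/

theorem ENNReal.tsum_pi_prod_eq_prod_tsum {κ ι : Type*} [Fintype κ] (f : κ → ι → ℝ≥0∞) :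
    ∑' b : κ → ι, ∏ k, f k (b k) = ∏ k, ∑' a, f k a := by
  refine Fintype.induction_empty_option
    (P := fun κ _ => ∀ f : κ → ι → ℝ≥0∞, ∑' b : κ → ι, ∏ k, f k (b k) = ∏ k, ∑' a, f k a)
    ?_ ?_ ?_ κ f
  · intro α β _ e ih f
    let := Fintype.ofEquiv β e.symm
    rw [← (e.arrowCongr (Equiv.refl ι)).tsum_eq, ← Fintype.prod_equiv e _ _ fun _ => rfl, ← ih]
    exact tsum_congr fun b => (Fintype.prod_equiv e _ _ fun k => by simp).symm
  · intro f
    simp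
  · intro α _ ih f
    rw [← Equiv.piOptionEquivProd.symm.tsum_eq, ENNReal.tsum_prod', Fintype.prod_option, ← ih,
      ← ENNReal.tsum_mul_right]
    simp [Fintype.prod_option, ENNReal.tsum_mul_left]

namespace MeasureTheory.Measure

theorem dirac_univ_pi {κ : Type*} [Fintype κ] {X : κ → Type*} [∀ k, MeasurableSpace (X k)]
    (y : ∀ k, X k) {t : ∀ k, Set (X k)} (ht : ∀ k, MeasurableSet (t k)) :
    dirac y (Set.univ.pi t) = ∏ k, dirac (y k) (t k) := by
  simp only [dirac_apply' _ (MeasurableSet.univ_pi ht), dirac_apply' _ (ht _)]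
  by_cases hy : y ∈ Set.univ.pi t
  · rw [Set.indicator_of_mem hy]
    exact (Finset.prod_eq_one fun k _ => Set.indicator_of_mem (hy k trivial) _).symm
  · obtain ⟨k, hk⟩ : ∃ k, y k ∉ t k := by simpa using hy
    rw [Set.indicator_of_notMem hy, Finset.prod_eq_zero (Finset.mem_univ k)]
    exact Set.indicator_of_notMem hk _

theorem pi_eq_sum_smul_dirac {κ X ι : Type*} [Fintype κ] [MeasurableSpace X]
    {x : ι → X} {s : ι → ℝ≥0∞} {η : Measure X} [SigmaFinite η]
    (hη : η = Measure.sum fun a => s a • dirac (x a)) :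
    Measure.pi (fun _ : κ => η)
      = Measure.sum fun b : κ → ι => (∏ k, s (b k)) • dirac (fun k => x (b k)) := by
  refine pi_eq fun t ht => ?_
  simp only [sum_apply _ (MeasurableSet.univ_pi ht), smul_apply, smul_eq_mul,
    dirac_univ_pi _ ht, ← Finset.prod_mul_distrib, hη, sum_apply _ (ht _)]
  exact ENNReal.tsum_pi_prod_eq_prod_tsum fun k a => s a * dirac (x a) (t k)

end MeasureTheory.Measure

theorem lintegral_pi_eq_tsum_of_eq_sum_smul_dirac {κ X ι : Type*} [Fintype κ] [MeasurableSpace X]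
    [MeasurableSingletonClass X] {x : ι → X} {s : ι → ℝ≥0∞} {η : Measure X} [SigmaFinite η]
    (hη : η = Measure.sum fun a => s a • Measure.dirac (x a)) (F : (κ → X) → ℝ≥0∞) :
    ∫⁻ z, F z ∂Measure.pi (fun _ : κ => η)
      = ∑' b : κ → ι, (∏ k, s (b k)) * F (fun k => x (b k)) := by
  simp [Measure.pi_eq_sum_smul_dirac hη, lintegral_sum_measure]

theorem tsum_mul_indicator_constant_on_fibers {κ ν ι X : Type*} {x : ι → X}
    (hx : Function.Injective x) {c : κ → ν} {rep : ν → κ} (hrep : ∀ j, c (rep j) = j)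
    (w : (κ → ι) → ℝ≥0∞) (g : (ν → X) → ℝ≥0∞) :
    ∑' b : κ → ι, w b * {z : κ → X | ∀ k l, c k = c l → z k = z l}.indicator
        (fun z => g fun j => z (rep j)) (fun k => x (b k))
      = ∑' a : ν → ι, w (fun k => a (c k)) * g (fun j => x (a j)) := by
  have hc : Function.Surjective c := fun j => ⟨rep j, hrep j⟩
  rw [← hc.injective_comp_right.tsum_eq]
  · refine tsum_congr fun a => ?_
    rw [Set.indicator_of_mem fun k l hkl => by simp [hkl]]
    simp only [Function.comp_def, hrep]
  · intro b hb
    have hmem : (fun k => x (b k)) ∈ {z : κ → X | ∀ k l, c k = c l → z k = z l} := by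
      by_contra h
      exact hb (by simp [Set.indicator_of_notMem h])
    exact ⟨fun j => b (rep j), funext fun k => hx (hmem _ _ (hrep (c k)))⟩

theorem pairing_of_discrete_measure_with_R_general
    {X : Type*} [TopologicalSpace X] [PolishSpace X] [MeasurableSpace X] [BorelSpace X]
    {ι : Type*} [DecidableEq ι]
    (x : ι → X) (hx : Function.Injective x)
    (s : ι → ℝ≥0∞)
    (η : Measure X) [SigmaFinite η]
    (hη : η = Measure.sum fun a : ι => s a • Measure.dirac (x a))
    (n I : ℕ) (i : Fin n → ℕ)
    (c : Fin I → Fin n) (rep : Fin n → Fin I)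
    (hfib : ∀ j, (Finset.univ.filter fun k => c k = j).card = i j)
    (hrep : ∀ j, c (rep j) = j)
    (g : (Fin n → X) → ℝ≥0∞)
    (hg0 : ∀ y : Fin n → X, ¬ Function.Injective y → g y = 0) :
    ∫⁻ z : Fin I → X,
        {z : Fin I → X | ∀ k l, c k = c l → z k = z l}.indicator
          (fun z => g fun j => z (rep j)) z
      ∂(Measure.pi fun _ : Fin I => η)
    = (∑' a : Fin n → ι,
        if Function.Injective a then g (fun j => x (a j)) * ∏ j, s (a j) ^ i j else 0) := by
  rw [lintegral_pi_eq_tsum_of_eq_sum_smul_dirac hη,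
    tsum_mul_indicator_constant_on_fibers hx hrep (fun b => ∏ k, s (b k))]
  refine tsum_congr fun a => ?_
  have hprod : ∏ k, s (a (c k)) = ∏ j, s (a j) ^ i j := by
    rw [Finset.prod_comp (fun j => s (a j)) c,
      Finset.image_univ_of_surjective fun j => ⟨rep j, hrep j⟩]
    simp_rw [hfib]
  split_ifs with ha
  · rw [hprod, mul_comm]
  · rw [hg0 (fun j => x (a j)) fun hxa => ha (Function.Injective.of_comp (f := x) hxa), mul_zero]

/-- For a discrete measure `η = ∑_a s a · δ_{x a}` with positive weights and distinct atoms,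
and a symmetric nonnegative function `g` on `Xⁿ` vanishing off the off-diagonal,
`⟨η^{⊗I}, R_{i} g⟩ = n! ∑_{n-subsets of atoms} g(x's) ∏ s^{i}`, written here as a sum over
injective `n`-tuples of atom indices.  The interval-block structure of
`R_{i 0, ..., i (n-1)} g` is encoded by a monotone map `c : Fin I → Fin n` with fibers of
cardinalities `i j` and a section `rep`. -/
theorem pairing_of_discrete_measure_with_R
    {X : Type*} [TopologicalSpace X] [PolishSpace X] [MeasurableSpace X] [BorelSpace X]
    {ι : Type*} [Countable ι] [DecidableEq ι]
    (x : ι → X) (hx : Function.Injective x)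
    (s : ι → ℝ≥0∞) (hs : ∀ a, 0 < s a) (hs' : ∀ a, s a ≠ ∞)
    (η : Measure X) [SigmaFinite η]
    (hη : η = Measure.sum fun a : ι => s a • Measure.dirac (x a))
    (n I : ℕ) (i : Fin n → ℕ) (hi : ∀ j, 1 ≤ i j) (hI : I = ∑ j, i j)
    (c : Fin I → Fin n) (rep : Fin n → Fin I) (hmono : Monotone c)
    (hfib : ∀ j, (Finset.univ.filter fun k => c k = j).card = i j)
    (hrep : ∀ j, c (rep j) = j)
    (g : (Fin n → X) → ℝ≥0∞) (hg : Measurable g)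
    (hgsym : ∀ (σ : Equiv.Perm (Fin n)) (y : Fin n → X), g (y ∘ σ) = g y)
    (hg0 : ∀ y : Fin n → X, ¬ Function.Injective y → g y = 0) :
    ∫⁻ z : Fin I → X,
        {z : Fin I → X | ∀ k l, c k = c l → z k = z l}.indicator
          (fun z => g fun j => z (rep j)) z
      ∂(Measure.pi fun _ : Fin I => η)
    = (∑' a : Fin n → ι,
        if Function.Injective a then g (fun j => x (a j)) * ∏ j, s (a j) ^ i j else 0) :=
  pairing_of_discrete_measure_with_R_general x hx s η hη n I i c rep hfib hrep g hg0
end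

section
/- Let μ be a probability measure on the space of Radon measures M(X) with finite moments, and suppose its moment measures satisfy the Carleman bound M^{(n)}(Λⁿ) ≤ C_Λⁿ n! for every compact Λ. If ν is another such probability measure with the same moment measures, then μ = ν. -/
/-!
Fix measurable sets `A₁, …, Aₖ` inside a compact `Λ`. The Carleman bound on `η Λ` gives the
vector `V η = (η A₁, …, η Aₖ)` exponential moments, and its mixed moments are values of the
moment measures, hence agree under `μ` and `ν`. For every linear functional `L` the moments of
`L ∘ V` therefore agree; they fix the moment generating function of `L ∘ V` near `0`, and the
analyticity of the complex moment generating function on a vertical strip carries this to the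
imaginary axis, i.e. to the characteristic function. By Cramér–Wold the laws of `V` under `μ`
and `ν` coincide. These finite-dimensional laws determine a measure on `Measure X`, because each
`η s` is the increasing limit of `η (s ∩ Kₙ)` for compact sets `Kₙ` exhausting `X`.
-/

open MeasureTheory ProbabilityTheory Filter
open scoped Nat ENNReal NNReal Topology

lemma ENNReal.ofReal_exp_mul_abs_eq_tsum (t : ℝ≥0) (x : ℝ) :
    ENNReal.ofReal (Real.exp (t * |x|)) = ∑' n : ℕ, (t : ℝ≥0∞) ^ n / n ! * ‖x‖ₑ ^ n := by
  rw [Real.exp_eq_exp_ℝ, NormedSpace.exp_eq_tsum_div,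
    ENNReal.ofReal_tsum_of_nonneg (fun n => by positivity) (Real.summable_pow_div_factorial _)]
  congr 1 with n
  rw [ENNReal.ofReal_div_of_pos (by positivity), ENNReal.ofReal_pow (by positivity),
    ENNReal.ofReal_natCast, ENNReal.ofReal_mul t.coe_nonneg, ENNReal.ofReal_coe_nnreal,
    ← Real.enorm_eq_ofReal_abs, mul_pow, ENNReal.mul_div_right_comm]

namespace ProbabilityTheory

section

variable {Ω : Type*} {mΩ : MeasurableSpace Ω} {μ : Measure Ω}

lemma integrable_exp_mul_abs_of_lintegral_pow_le {f : Ω → ℝ} (hf : AEMeasurable f μ)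
    {C : ℝ≥0} (hC : ∀ n : ℕ, ∫⁻ ω, ‖f ω‖ₑ ^ n ∂μ ≤ C ^ n * n !) {t : ℝ≥0} (ht : t * C < 1) :
    Integrable (fun ω => Real.exp (t * |f ω|)) μ := by
  refine ⟨(Real.measurable_exp.comp_aemeasurable (hf.abs.const_mul _)).aestronglyMeasurable,
    (hasFiniteIntegral_iff_ofReal (ae_of_all _ fun _ => (Real.exp_pos _).le)).2 ?_⟩
  have hterm (n : ℕ) :
      (t : ℝ≥0∞) ^ n / n ! * ∫⁻ ω, ‖f ω‖ₑ ^ n ∂μ ≤ ((t * C : ℝ≥0) : ℝ≥0∞) ^ n :=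
    calc (t : ℝ≥0∞) ^ n / n ! * ∫⁻ ω, ‖f ω‖ₑ ^ n ∂μ
        ≤ (t : ℝ≥0∞) ^ n / n ! * (C ^ n * n !) := by gcongr; exact hC n
      _ = ((t * C : ℝ≥0) : ℝ≥0∞) ^ n := by
        rw [← mul_assoc, mul_right_comm, ENNReal.div_mul_cancel (by positivity) (by simp)]
        push_cast
        ring
  calc ∫⁻ ω, ENNReal.ofReal (Real.exp (t * |f ω|)) ∂μ
      = ∑' n : ℕ, (t : ℝ≥0∞) ^ n / n ! * ∫⁻ ω, ‖f ω‖ₑ ^ n ∂μ := by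
        simp_rw [ENNReal.ofReal_exp_mul_abs_eq_tsum]
        rw [lintegral_tsum fun n => (hf.enorm.pow_const n).const_mul _]
        congr 1 with n
        exact lintegral_const_mul' _ _ (ENNReal.div_lt_top (by simp) (by positivity)).ne
    _ ≤ ∑' n : ℕ, ((t * C : ℝ≥0) : ℝ≥0∞) ^ n := ENNReal.tsum_le_tsum hterm
    _ < ∞ := by
        rw [ENNReal.tsum_geometric, ENNReal.inv_lt_top, tsub_pos_iff_lt]
        exact_mod_cast ht

end

section

open Complex

variable {Ω Ω' : Type*} {mΩ : MeasurableSpace Ω} {mΩ' : MeasurableSpace Ω'}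
  {μ : Measure Ω} {μ' : Measure Ω'} {X : Ω → ℝ} {Y : Ω' → ℝ}

lemma mgf_eventuallyEq_of_integral_pow_eq (hX : 0 ∈ interior (integrableExpSet X μ))
    (hY : 0 ∈ interior (integrableExpSet Y μ'))
    (h : ∀ n : ℕ, ∫ ω, X ω ^ n ∂μ = ∫ ω, Y ω ^ n ∂μ') :
    mgf X μ =ᶠ[𝓝 0] mgf Y μ' := by
  have hXs := hasFPowerSeriesAt_mgf hX
  have hYs := hasFPowerSeriesAt_mgf hY
  simp only [zero_mul, Real.exp_zero, mul_one, h] at hXs hYs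
  filter_upwards [hXs.eventually_hasSum, hYs.eventually_hasSum] with x hXx hYx
  simpa using hXx.unique hYx

theorem map_eq_of_integral_pow_eq [IsFiniteMeasure μ] [IsFiniteMeasure μ']
    (hX : 0 ∈ interior (integrableExpSet X μ)) (hY : 0 ∈ interior (integrableExpSet Y μ'))
    (h : ∀ n : ℕ, ∫ ω, X ω ^ n ∂μ = ∫ ω, Y ω ^ n ∂μ') :
    μ.map X = μ'.map Y := by
  set U : Set ℂ :=
    {z | z.re ∈ interior (integrableExpSet X μ) ∩ interior (integrableExpSet Y μ')}
  have hU : IsPreconnected U :=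
    ((convex_integrableExpSet.interior.inter convex_integrableExpSet.interior).linear_preimage
      reLm).isPreconnected
  have hfreq : ∃ᶠ z in 𝓝[≠] (0 : ℂ), complexMGF X μ z = complexMGF Y μ' z := by
    have hreal : ∃ᶠ x in 𝓝[≠] (0 : ℝ), mgf X μ x = mgf Y μ' x :=
      ((mgf_eventuallyEq_of_integral_pow_eq hX hY h).filter_mono nhdsWithin_le_nhds).frequently
    have hofReal : Tendsto ((↑) : ℝ → ℂ) (𝓝[≠] 0) (𝓝[≠] 0) :=
      tendsto_nhdsWithin_of_tendsto_nhds_of_eventually_within _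
        (continuous_ofReal.tendsto' 0 0 ofReal_zero |>.mono_left nhdsWithin_le_nhds)
        (eventually_nhdsWithin_of_forall fun x hx => by simpa using hx)
    exact hofReal.frequently (hreal.mono fun x hx => by simp [complexMGF_ofReal, hx])
  have hEqOn :=
    (analyticOnNhd_complexMGF.mono fun z hz => hz.1).eqOn_of_preconnected_of_frequently_eq
      (analyticOnNhd_complexMGF.mono fun z hz => hz.2) hU (by simp [U, hX, hY]) hfreq
  refine Measure.ext_of_charFun (funext fun t => ?_)
  rw [← complexMGF_mul_I (aemeasurable_of_mem_interior_integrableExpSet hX),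
    ← complexMGF_mul_I (aemeasurable_of_mem_interior_integrableExpSet hY)]
  exact hEqOn (by simp [U, hX, hY])

end

section

variable {ι : Type*} [Fintype ι] {ρ ρ' : Measure (ι → ℝ)} {t : ℝ}

lemma integrable_prod_apply_of_integrable_exp_mul_norm [IsFiniteMeasure ρ] (ht : 0 < t)
    (hρ : Integrable (fun x => Real.exp (t * ‖x‖)) ρ) {n : ℕ} (g : Fin n → ι) :
    Integrable (fun x => ∏ j, x (g j)) ρ := by
  have hneg : Integrable (fun x => Real.exp (-t * ‖x‖)) ρ :=
    (integrable_const 1).mono' (by fun_prop) (ae_of_all _ fun x => by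
      rw [Real.norm_eq_abs, abs_of_pos (Real.exp_pos _), Real.exp_le_one_iff]
      nlinarith [norm_nonneg x])
  refine (integrable_pow_abs_of_integrable_exp_mul ht.ne' hρ hneg n).mono'
    (continuous_finsetProd _ fun j _ => continuous_apply (g j)).aestronglyMeasurable
    (ae_of_all _ fun x => ?_)
  rw [norm_prod, abs_norm, ← Fin.prod_const]
  exact Finset.prod_le_prod (fun _ _ => norm_nonneg _) fun j _ => norm_le_pi_norm x (g j)

lemma zero_mem_interior_integrableExpSet_of_integrable_exp_mul_norm (ht : 0 < t)
    (hρ : Integrable (fun x => Real.exp (t * ‖x‖)) ρ) (L : StrongDual ℝ (ι → ℝ)) :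
    0 ∈ interior (integrableExpSet L ρ) := by
  set s := t / (‖L‖ + 1)
  have hs : 0 < s := by positivity
  refine mem_interior_iff_mem_nhds.2 (mem_of_superset (Ioo_mem_nhds (neg_lt_zero.2 hs) hs)
    fun u hu => hρ.mono' (by fun_prop) (ae_of_all _ fun x => ?_))
  have hu : |u| * ‖L‖ ≤ t :=
    calc |u| * ‖L‖ ≤ s * (‖L‖ + 1) := by gcongr; exacts [(abs_lt.2 hu).le, by linarith]
      _ = t := div_mul_cancel₀ t (by positivity)
  rw [Real.norm_eq_abs, abs_of_pos (Real.exp_pos _), Real.exp_le_exp]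
  calc u * L x ≤ |u| * ‖L x‖ := by rw [Real.norm_eq_abs, ← abs_mul]; exact le_abs_self _
    _ ≤ |u| * (‖L‖ * ‖x‖) := by gcongr; exact L.le_opNorm x
    _ ≤ t * ‖x‖ := by rw [← mul_assoc]; gcongr

lemma integral_sum_mul_pow_eq [IsFiniteMeasure ρ] (ht : 0 < t)
    (hρ : Integrable (fun x => Real.exp (t * ‖x‖)) ρ) (c : ι → ℝ) (n : ℕ) :
    ∫ x, (∑ i, c i * x i) ^ n ∂ρ = ∑ g : Fin n → ι, (∏ j, c (g j)) * ∫ x, ∏ j, x (g j) ∂ρ := by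
  simp_rw [Fintype.sum_pow, Finset.prod_mul_distrib]
  rw [integral_finsetSum _ fun g _ =>
    (integrable_prod_apply_of_integrable_exp_mul_norm ht hρ g).const_mul _]
  simp_rw [integral_const_mul]

theorem _root_.MeasureTheory.Measure.ext_of_integral_prod_eq [IsFiniteMeasure ρ]
    [IsFiniteMeasure ρ'] (ht : 0 < t) (hρ : Integrable (fun x => Real.exp (t * ‖x‖)) ρ)
    (hρ' : Integrable (fun x => Real.exp (t * ‖x‖)) ρ')
    (h : ∀ (n : ℕ) (g : Fin n → ι), ∫ x, ∏ j, x (g j) ∂ρ = ∫ x, ∏ j, x (g j) ∂ρ') :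
    ρ = ρ' := by
  classical
  refine Measure.ext_of_charFunDual (funext fun L => ?_)
  have hL : ⇑L = fun x => ∑ i, L (Pi.single i 1) * x i := by
    ext x
    conv_lhs => rw [← ContinuousLinearMap.sum_comp_single ℝ _ L x]
    refine Finset.sum_congr rfl fun i _ => ?_
    rw [ContinuousLinearMap.comp_apply, ContinuousLinearMap.single_apply, mul_comm,
      ← smul_eq_mul, ← map_smul, ← Pi.single_smul, smul_eq_mul, mul_one]
  rw [charFunDual_eq_charFun_map_one, charFunDual_eq_charFun_map_one,
    map_eq_of_integral_pow_eq
      (zero_mem_interior_integrableExpSet_of_integrable_exp_mul_norm ht hρ L)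
      (zero_mem_interior_integrableExpSet_of_integrable_exp_mul_norm ht hρ' L) fun n => ?_]
  rw [hL, integral_sum_mul_pow_eq ht hρ, integral_sum_mul_pow_eq ht hρ']
  simp_rw [h]

end

end ProbabilityTheory

namespace MeasureTheory

theorem Measure.ext_of_map_eq_of_comap_eq {α β : Type*} {mα : MeasurableSpace α}
    {mβ : MeasurableSpace β} {μ ν : Measure α} {f : α → β} (hf : mβ.comap f = mα)
    (h : μ.map f = ν.map f) : μ = ν := by
  have hfm : Measurable f := measurable_iff_comap_le.2 hf.le
  ext s hs
  rw [← hf] at hs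
  obtain ⟨t, ht, rfl⟩ := hs
  rw [← Measure.map_apply hfm ht, h, Measure.map_apply hfm ht]

def RelCompactMeasurableSet (X : Type*) [TopologicalSpace X] [MeasurableSpace X] : Type _ :=
  {s : Set X // MeasurableSet s ∧ ∃ K, IsCompact K ∧ s ⊆ K}

variable {X : Type*} [MeasurableSpace X]

section

variable [TopologicalSpace X]

def Measure.evalRelCompact (η : Measure X) (s : RelCompactMeasurableSet X) : ℝ≥0∞ := η s.1

lemma Measure.measurable_evalRelCompact : Measurable (Measure.evalRelCompact (X := X)) :=
  measurable_pi_lambda _ fun s => Measure.measurable_coe s.2.1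

theorem Measure.comap_evalRelCompact [T2Space X] [SigmaCompactSpace X] [OpensMeasurableSpace X] :
    MeasurableSpace.comap Measure.evalRelCompact MeasurableSpace.pi =
      (Measure.instMeasurableSpace : MeasurableSpace (Measure X)) := by
  refine le_antisymm (measurable_iff_comap_le.1 Measure.measurable_evalRelCompact)
    fun t ht => ?_
  refine Measure.measurable_of_measurable_coe (mβ := MeasurableSpace.comap _ MeasurableSpace.pi)
    id (fun s hs => ?_) ht
  have hK (n : ℕ) : MeasurableSet (s ∩ compactCovering X n) ∧
      ∃ K, IsCompact K ∧ s ∩ compactCovering X n ⊆ K :=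
    ⟨hs.inter (isCompact_compactCovering X n).measurableSet,
      _, isCompact_compactCovering X n, Set.inter_subset_right⟩
  have hsup (η : Measure X) : η s = ⨆ n, η (s ∩ compactCovering X n) := by
    rw [← Monotone.measure_iUnion fun m n hmn => Set.inter_subset_inter_right s
      (compactCovering_subset X hmn), ← Set.inter_iUnion, iUnion_compactCovering, Set.inter_univ]
  simp only [id, hsup]
  exact Measurable.iSup fun n =>
    (measurable_pi_apply (⟨_, hK n⟩ : RelCompactMeasurableSet X)).comp
      (comap_measurable Measure.evalRelCompact)

end

section

variable {ξ μ ν : Measure (Measure X)} {Λ : Set X} {C : ℝ≥0} {ι : Type*} {A : ι → Set X}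

lemma Measure.measurable_toReal_eval (hA : ∀ i, MeasurableSet (A i)) :
    Measurable fun (η : Measure X) i => (η (A i)).toReal :=
  measurable_pi_lambda _ fun i => (Measure.measurable_coe (hA i)).ennreal_toReal

lemma ae_measure_ne_top_of_lintegral_pow_le (hΛ : MeasurableSet Λ)
    (hC : ∀ n : ℕ, ∫⁻ η, η Λ ^ n ∂ξ ≤ C ^ n * n !) : ∀ᵐ η ∂ξ, η Λ ≠ ∞ := by
  have h1 : ∫⁻ η, η Λ ∂ξ ≤ C := by simpa using hC 1
  exact (ae_lt_top (Measure.measurable_coe hΛ) (ne_top_of_le_ne_top ENNReal.coe_ne_top h1)).mono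
    fun _ => ne_of_lt

lemma integrable_exp_mul_norm_map_toReal_eval [Fintype ι] (hΛ : MeasurableSet Λ)
    (hA : ∀ i, MeasurableSet (A i)) (hAΛ : ∀ i, A i ⊆ Λ)
    (hC : ∀ n : ℕ, ∫⁻ η, η Λ ^ n ∂ξ ≤ C ^ n * n !) :
    Integrable (fun x => Real.exp (((C + 1)⁻¹ : ℝ≥0) * ‖x‖))
      (ξ.map fun η i => (η (A i)).toReal) := by
  have hexp := integrable_exp_mul_abs_of_lintegral_pow_le
    (Measure.measurable_coe hΛ).ennreal_toReal.aemeasurable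
    (fun n => (lintegral_mono fun η => by
      gcongr
      rw [Real.enorm_eq_ofReal_abs, abs_of_nonneg ENNReal.toReal_nonneg]
      exact ENNReal.ofReal_toReal_le).trans (hC n))
    (t := (C + 1)⁻¹) (by rw [inv_mul_lt_iff₀ (by positivity), mul_one]; exact lt_add_one C)
  have hcont : Continuous fun x : ι → ℝ => Real.exp (((C + 1)⁻¹ : ℝ≥0) * ‖x‖) := by fun_prop
  have hV := Measure.measurable_toReal_eval hA
  rw [integrable_map_measure hcont.aestronglyMeasurable hV.aemeasurable]
  refine hexp.mono' (hcont.measurable.comp hV).aestronglyMeasurable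
    ((ae_measure_ne_top_of_lintegral_pow_le hΛ hC).mono fun η hη => ?_)
  rw [Function.comp_apply, Real.norm_eq_abs, abs_of_pos (Real.exp_pos _), Real.exp_le_exp]
  gcongr
  refine (pi_norm_le_iff_of_nonneg (abs_nonneg _)).2 fun i => ?_
  simp only [Real.norm_eq_abs, abs_of_nonneg ENNReal.toReal_nonneg]
  exact ENNReal.toReal_mono hη (measure_mono (hAΛ i))

lemma integral_prod_map_toReal_eval [Fintype ι] (hA : ∀ i, MeasurableSet (A i))
    (hfin : ∀ᵐ η ∂ξ, ∀ i, η (A i) ≠ ∞) {n : ℕ} (g : Fin n → ι) :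
    ∫ x, ∏ j, x (g j) ∂(ξ.map fun η i => (η (A i)).toReal) =
      (∫⁻ η, ∏ j, η (A (g j)) ∂ξ).toReal := by
  rw [integral_map (Measure.measurable_toReal_eval hA).aemeasurable
    (continuous_finsetProd _ fun j _ => continuous_apply (g j)).aestronglyMeasurable,
    ← integral_toReal (Finset.measurable_fun_prod _ fun j _ =>
      Measure.measurable_coe (hA (g j))).aemeasurable
      (hfin.mono fun η hη => ENNReal.prod_lt_top fun j _ => (hη (g j)).lt_top)]
  simp_rw [ENNReal.toReal_prod]

lemma map_eval_eq_map_ofReal_map_toReal_eval (hA : ∀ i, MeasurableSet (A i))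
    (hfin : ∀ᵐ η ∂ξ, ∀ i, η (A i) ≠ ∞) :
    ξ.map (fun η i => η (A i)) =
      (ξ.map fun η i => (η (A i)).toReal).map fun x i => ENNReal.ofReal (x i) := by
  rw [Measure.map_map (measurable_pi_lambda _ fun i => (measurable_pi_apply i).ennreal_ofReal)
    (Measure.measurable_toReal_eval hA)]
  exact Measure.map_congr
    (hfin.mono fun η hη => funext fun i => (ENNReal.ofReal_toReal (hη i)).symm)

theorem map_eval_eq_of_lintegral_prod_eq [Fintype ι] [IsFiniteMeasure μ] [IsFiniteMeasure ν]
    (hΛ : MeasurableSet Λ) (hA : ∀ i, MeasurableSet (A i)) (hAΛ : ∀ i, A i ⊆ Λ)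
    (hC : ∀ n : ℕ, ∫⁻ η, η Λ ^ n ∂μ ≤ C ^ n * n !)
    (heq : ∀ (n : ℕ) (B : Fin n → Set X), (∀ j, MeasurableSet (B j)) →
      ∫⁻ η, ∏ j, η (B j) ∂μ = ∫⁻ η, ∏ j, η (B j) ∂ν) :
    μ.map (fun η i => η (A i)) = ν.map (fun η i => η (A i)) := by
  have hCν (n : ℕ) : ∫⁻ η, η Λ ^ n ∂ν ≤ C ^ n * n ! := by
    have h := heq n (fun _ => Λ) fun _ => hΛ
    simp only [Finset.prod_const, Finset.card_univ, Fintype.card_fin] at h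
    exact h ▸ hC n
  have hfin {ξ : Measure (Measure X)} (hξ : ∀ n : ℕ, ∫⁻ η, η Λ ^ n ∂ξ ≤ C ^ n * n !) :
      ∀ᵐ η ∂ξ, ∀ i, η (A i) ≠ ∞ :=
    (ae_measure_ne_top_of_lintegral_pow_le hΛ hξ).mono fun η hη i =>
      ne_top_of_le_ne_top hη (measure_mono (hAΛ i))
  rw [map_eval_eq_map_ofReal_map_toReal_eval hA (hfin hC),
    map_eval_eq_map_ofReal_map_toReal_eval hA (hfin hCν),
    Measure.ext_of_integral_prod_eq (by positivity)
      (integrable_exp_mul_norm_map_toReal_eval hΛ hA hAΛ hC)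
      (integrable_exp_mul_norm_map_toReal_eval hΛ hA hAΛ hCν) fun n g => ?_]
  rw [integral_prod_map_toReal_eval hA (hfin hC), integral_prod_map_toReal_eval hA (hfin hCν),
    heq n _ fun j => hA (g j)]

end

end MeasureTheory

theorem random_measure_determined_by_moments_general
    {X : Type*} [TopologicalSpace X] [LocallyCompactSpace X] [PolishSpace X]
    [MeasurableSpace X] [BorelSpace X]
    (μ ν : Measure (Measure X)) [IsProbabilityMeasure μ] [IsProbabilityMeasure ν]
    (hC : ∀ Λ : Set X, IsCompact Λ → ∃ C : ℝ≥0, ∀ n : ℕ,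
      ∫⁻ η, (η Λ) ^ n ∂μ ≤ (C : ℝ≥0∞) ^ n * (n ! : ℝ≥0∞))
    (heq : ∀ (n : ℕ) (A : Fin n → Set X), (∀ j, MeasurableSet (A j)) →
      ∫⁻ η, ∏ j, η (A j) ∂μ = ∫⁻ η, ∏ j, η (A j) ∂ν) :
    μ = ν := by
  refine Measure.ext_of_map_eq_of_comap_eq Measure.comap_evalRelCompact
    (IsProjectiveLimit.unique (P := fun I => (μ.map Measure.evalRelCompact).map I.restrict)
      (fun _ => rfl) fun I => ?_)
  dsimp only
  rw [Measure.map_map (Finset.measurable_restrict I) Measure.measurable_evalRelCompact,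
    Measure.map_map (Finset.measurable_restrict I) Measure.measurable_evalRelCompact]
  choose K hK hsK using fun s : I => s.1.2.2
  have hΛ : IsCompact (⋃ s, K s) := isCompact_iUnion hK
  obtain ⟨C, hCΛ⟩ := hC _ hΛ
  exact (map_eval_eq_of_lintegral_prod_eq hΛ.measurableSet (fun s => s.1.2.1)
    (fun s => (hsK s).trans (Set.subset_iUnion K s)) hCΛ heq).symm

/-- A random measure (probability measure on the space of Radon measures on a locally compact
Polish space `X`) with finite moments satisfying the Carleman bound
`M^{(n)}(Λⁿ) ≤ C_Λⁿ n!` for each compact `Λ` is uniquely determined by its moment measures. -/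
theorem random_measure_determined_by_moments
    {X : Type*} [TopologicalSpace X] [LocallyCompactSpace X] [PolishSpace X]
    [MeasurableSpace X] [BorelSpace X]
    (μ ν : Measure (Measure X)) [IsProbabilityMeasure μ] [IsProbabilityMeasure ν]
    (hμrad : ∀ᵐ η ∂μ, ∀ Λ : Set X, IsCompact Λ → η Λ < ∞)
    (hνrad : ∀ᵐ η ∂ν, ∀ Λ : Set X, IsCompact Λ → η Λ < ∞)
    (hC : ∀ Λ : Set X, IsCompact Λ → ∃ C : ℝ≥0, ∀ n : ℕ,
      ∫⁻ η, (η Λ) ^ n ∂μ ≤ (C : ℝ≥0∞) ^ n * (n ! : ℝ≥0∞))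
    (heq : ∀ (n : ℕ) (A : Fin n → Set X), (∀ j, MeasurableSet (A j)) →
      ∫⁻ η, ∏ j, η (A j) ∂μ = ∫⁻ η, ∏ j, η (A j) ∂ν) :
    μ = ν :=
  random_measure_determined_by_moments_general μ ν hC heq
end

section
/- Suppose μ is a random discrete measure on X (a probability measure on the cone K(X) of discrete Radon measures) with moment measures satisfying condition (C1). Then for every i ∈ ℕ and compact Λ, (1/n!) M_{i+1,1,...,1}(Λ^{(n)}_{0̂}) ≤ (i+1)! C_Λ^{n+i}. -/
open MeasureTheory
open scoped Nat ENNReal NNReal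

/-!
The configurations on the left lie in the stratum of `Λ^I` on which exactly the `i + 1`
coordinates of the first block coincide. By the moment formula, `M I` restricted to `Λ^I` is a
finite measure invariant under permuting coordinates, so all `C(I, i + 1)` strata of this shape
have the same mass; for `i ≥ 1` they are pairwise disjoint, so by (C1) each has mass at most
`C^I I! / C(I, i + 1) = C^I (i + 1)! (n - 1)!`. For `i = 0` the bound `M I (Λ^I) ≤ C^n n!`
suffices.
-/

open Set Function

section Exchangeable

variable {ι X : Type*} [Fintype ι] [MeasurableSpace X]

theorem measure_setOf_forall_comp_perm_mem_of_moment {μ : Measure (Measure X)}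
    {M : Measure (ι → X)}
    (hmom : ∀ A : ι → Set X, (∀ j, MeasurableSet (A j)) →
      M {z | ∀ j, z j ∈ A j} = ∫⁻ η, ∏ j, η (A j) ∂μ)
    (σ : Equiv.Perm ι) {A : ι → Set X} (hA : ∀ j, MeasurableSet (A j)) :
    M {z | ∀ j, z (σ j) ∈ A j} = M {z | ∀ j, z j ∈ A j} := by
  have hreindex : {z : ι → X | ∀ j, z (σ j) ∈ A j} = {z | ∀ k, z k ∈ A (σ.symm k)} := by
    ext z
    simp only [mem_ofPred_eq, ← σ.forall_congr_right (q := fun k => z k ∈ A (σ.symm k)),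
      Equiv.symm_apply_apply]
  rw [hreindex, hmom _ fun k => hA (σ.symm k), hmom _ hA]
  exact lintegral_congr fun η => Equiv.prod_comp σ.symm fun j => η (A j)

theorem map_comp_perm_restrict_eq {M : Measure (ι → X)} {Λ : Set X} (hΛ : MeasurableSet Λ)
    (hM : M {z | ∀ j, z j ∈ Λ} ≠ ∞)
    (hperm : ∀ (σ : Equiv.Perm ι) (A : ι → Set X), (∀ j, MeasurableSet (A j)) →
      M {z | ∀ j, z (σ j) ∈ A j} = M {z | ∀ j, z j ∈ A j})
    (π : Equiv.Perm ι) :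
    (M.restrict {z | ∀ j, z j ∈ Λ}).map (fun z => z ∘ π) = M.restrict {z | ∀ j, z j ∈ Λ} := by
  -- finiteness is what lets the measure be determined by its values on boxes
  have : IsFiniteMeasure (M.restrict {z | ∀ j, z j ∈ Λ}) :=
    ⟨by rw [Measure.restrict_apply_univ]; exact hM.lt_top⟩
  have hπ : Measurable fun z : ι → X => z ∘ π := by fun_prop
  refine ext_of_generate_finite _ generateFrom_pi.symm isPiSystem_pi ?_ ?_
  · rintro _ ⟨A, hA, rfl⟩
    have hA : ∀ j, MeasurableSet (A j) := fun j => hA j (mem_univ j)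
    have hAΛ : ∀ j, MeasurableSet (A j ∩ Λ) := fun j => (hA j).inter hΛ
    rw [Measure.map_apply hπ (.univ_pi hA), Measure.restrict_apply (hπ (.univ_pi hA)),
      Measure.restrict_apply (.univ_pi hA)]
    convert hperm π (fun j => A j ∩ Λ) hAΛ using 2
    · ext z
      simp only [mem_inter_iff, mem_preimage, mem_univ_pi, comp_apply, mem_ofPred_eq, forall_and,
        ← π.forall_congr_right (q := fun k => z k ∈ Λ)]
    · ext z
      simp only [mem_inter_iff, mem_univ_pi, mem_ofPred_eq, forall_and]
  · rw [Measure.map_apply hπ .univ, preimage_univ]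

end Exchangeable

section DiagonalStratum

variable {ι X : Type*}

def diagonalStratum (B : Finset ι) : Set (ι → X) :=
  {z | ∀ k l, z k = z l ↔ k = l ∨ k ∈ B ∧ l ∈ B}

theorem measurableSet_diagonalStratum [Countable ι] [MeasurableSpace X] [MeasurableEq X]
    (B : Finset ι) :
    MeasurableSet (diagonalStratum (X := X) B) :=
  measurableSet_setOfPred.2 (by fun_prop)

theorem preimage_comp_perm_diagonalStratum (π : Equiv.Perm ι) (B : Finset ι) :
    (fun z : ι → X => z ∘ π) ⁻¹' diagonalStratum B = diagonalStratum (B.map π.toEmbedding) := by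
  ext z
  simp only [diagonalStratum, mem_preimage, mem_ofPred_eq, comp_apply, Finset.mem_map_equiv]
  exact ⟨fun h k l => by simpa using h (π.symm k) (π.symm l),
    fun h k l => by simpa using h (π k) (π l)⟩

theorem subset_of_mem_diagonalStratum {B B' : Finset ι} {z : ι → X} (hB : 1 < B.card)
    (hz : z ∈ diagonalStratum B) (hz' : z ∈ diagonalStratum B') : B ⊆ B' := by
  intro k hk
  obtain ⟨l, hl, hlk⟩ := B.exists_mem_ne hB k
  rcases (hz' k l).1 ((hz k l).2 (.inr ⟨hk, hl⟩)) with h | h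
  · exact absurd h.symm hlk
  · exact h.1

theorem pairwiseDisjoint_diagonalStratum (s : Finset ι) {m : ℕ} (hm : 1 < m) :
    (s.powersetCard m : Set (Finset ι)).PairwiseDisjoint (diagonalStratum (X := X)) := by
  intro B hB B' hB' hne
  rw [Finset.mem_coe, Finset.mem_powersetCard] at hB hB'
  refine Set.disjoint_left.2 fun z hz hz' => hne ?_
  exact (subset_of_mem_diagonalStratum (hB.2 ▸ hm) hz hz').antisymm
    (subset_of_mem_diagonalStratum (hB'.2 ▸ hm) hz' hz)

theorem choose_mul_measure_diagonalStratum_le [Fintype ι] [MeasurableSpace X] [MeasurableEq X]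
    {ν : Measure (ι → X)} (hν : ∀ π : Equiv.Perm ι, ν.map (fun z => z ∘ π) = ν) {B : Finset ι}
    (hB : 1 < B.card) :
    ((Fintype.card ι).choose B.card : ℝ≥0∞) * ν (diagonalStratum B) ≤ ν univ := by
  have hsymm : ∀ B' ∈ Finset.univ.powersetCard B.card,
      ν (diagonalStratum B') = ν (diagonalStratum B) := by
    intro B' hB'
    obtain ⟨π, rfl⟩ := Equiv.Perm.exists_map_finset_eq B B' (Finset.mem_powersetCard.1 hB').2.symm
    rw [← preimage_comp_perm_diagonalStratum,
      ← Measure.map_apply (by fun_prop) (measurableSet_diagonalStratum B), hν]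
  calc _ = ∑ B' ∈ Finset.univ.powersetCard B.card, ν (diagonalStratum B') := by
          rw [Finset.sum_congr rfl hsymm, Finset.sum_const, Finset.card_powersetCard,
            Finset.card_univ, nsmul_eq_mul]
    _ = ν (⋃ B' ∈ Finset.univ.powersetCard B.card, diagonalStratum B') :=
          (measure_biUnion_finset (pairwiseDisjoint_diagonalStratum _ hB)
            fun B' _ => measurableSet_diagonalStratum B').symm
    _ ≤ ν univ := measure_mono (subset_univ _)

theorem setOf_fiberConst_subset_diagonalStratum [Fintype ι] {κ : Type*} [DecidableEq κ]
    {c : ι → κ} {rep : κ → ι} (hrep : ∀ j, c (rep j) = j) {j₀ : κ}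
    (hsingle : ∀ j ≠ j₀, (Finset.univ.filter fun k => c k = j).card = 1) :
    {z : ι → X | (∀ k l, c k = c l → z k = z l) ∧ Injective fun j => z (rep j)} ⊆
      diagonalStratum (Finset.univ.filter fun k => c k = j₀) := by
  rintro z ⟨hconst, hinj⟩ k l
  have hfix : ∀ k, z k = z (rep (c k)) := fun k => hconst k _ (hrep (c k)).symm
  simp only [Finset.mem_filter, Finset.mem_univ, true_and]
  constructor
  · intro hzkl
    have hckl : c k = c l := hinj (by simpa only [← hfix] using hzkl)
    by_cases hk : c k = j₀
    · exact .inr ⟨hk, hckl ▸ hk⟩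
    · exact .inl (Finset.card_le_one.1 (hsingle _ hk).le k (by simp) l (by simp [hckl]))
  · rintro (rfl | ⟨hk, hl⟩)
    · rfl
    · exact hconst k l (hk.trans hl.symm)

theorem map_restrict_fiberConst_le_restrict_diagonalStratum [Fintype ι] {κ : Type*} [Fintype κ]
    [DecidableEq κ] [MeasurableSpace X] [MeasurableEq X] (M : Measure (ι → X)) {Λ : Set X}
    (hΛ : MeasurableSet Λ) {c : ι → κ} {rep : κ → ι} (hrep : ∀ j, c (rep j) = j) {j₀ : κ}
    (hsingle : ∀ j ≠ j₀, (Finset.univ.filter fun k => c k = j).card = 1) :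
    (M.restrict {z | (∀ k l, c k = c l → z k = z l) ∧ Injective fun j => z (rep j)}).map
        (fun z j => z (rep j)) {y | (∀ j, y j ∈ Λ) ∧ Injective y}
      ≤ M.restrict {z | ∀ j, z j ∈ Λ} (diagonalStratum (Finset.univ.filter fun k => c k = j₀)) := by
  have hG : MeasurableSet {y : κ → X | (∀ j, y j ∈ Λ) ∧ Injective y} :=
    measurableSet_setOfPred.2 (by unfold Injective; fun_prop)
  have hrestr : Measurable fun (z : ι → X) j => z (rep j) := by fun_prop
  rw [Measure.map_apply hrestr hG, Measure.restrict_apply (hrestr hG),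
    Measure.restrict_apply (measurableSet_diagonalStratum _)]
  refine measure_mono ?_
  rintro z ⟨⟨hzΛ, -⟩, hz⟩
  refine ⟨setOf_fiberConst_subset_diagonalStratum hrep hsingle hz, fun k => ?_⟩
  exact hz.1 k _ (hrep (c k)).symm ▸ hzΛ (c k)

end DiagonalStratum

theorem ENNReal.le_factorial_mul_of_choose_mul_le {n i : ℕ} (hn : 0 < n) {a x : ℝ≥0∞}
    (h : ((n + i).choose (i + 1) : ℝ≥0∞) * x ≤ a * (n + i)!) : x ≤ n ! * ((i + 1)! * a) := by
  have hK : ((n + i).choose (i + 1) : ℝ≥0∞) ≠ 0 := by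
    exact_mod_cast (Nat.choose_pos (by omega)).ne'
  have hfact : (n + i)! = (n + i).choose (i + 1) * ((i + 1)! * (n - 1)!) := by
    rw [← mul_assoc, ← Nat.choose_mul_factorial_mul_factorial (show i + 1 ≤ n + i by omega)]
    congr 2
    omega
  rw [hfact, Nat.cast_mul, mul_left_comm, ENNReal.mul_le_mul_iff_right hK (natCast_ne_top _)] at h
  calc x ≤ a * ((i + 1)! * (n - 1)! : ℕ) := h
    _ ≤ a * ((i + 1)! * n ! : ℕ) := by gcongr; exact Nat.sub_le n 1
    _ = n ! * ((i + 1)! * a) := by push_cast; ring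

/-- `M_{i+1,1,…,1}` is the push-forward under the block-value map of `M I` restricted to the
stratum of the interval partition of `Fin I` into the fibres of `c`, of sizes `e j`. -/
theorem random_discrete_measure_stratum_bound_general
    {X : Type*} [TopologicalSpace X] [PolishSpace X] [MeasurableSpace X] [BorelSpace X]
    (μ : Measure (Measure X))
    (M : (m : ℕ) → Measure (Fin m → X))
    (hmom : ∀ (m : ℕ) (A : Fin m → Set X), (∀ j, MeasurableSet (A j)) →
      M m {z | ∀ j, z j ∈ A j} = ∫⁻ η, ∏ j, η (A j) ∂μ)
    (Λ : Set X) (hΛ : IsCompact Λ) (C : ℝ≥0)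
    (hC1 : ∀ m : ℕ, M m {z | ∀ j, z j ∈ Λ} ≤ (C : ℝ≥0∞) ^ m * (m ! : ℝ≥0∞))
    (i n : ℕ) (hn : 0 < n) (e : Fin n → ℕ)
    (he : e = fun j => if j = ⟨0, hn⟩ then i + 1 else 1)
    (I : ℕ) (hI : I = ∑ j, e j)
    (c : Fin I → Fin n) (rep : Fin n → Fin I)
    (hfib : ∀ j, (Finset.univ.filter fun k => c k = j).card = e j)
    (hrep : ∀ j, c (rep j) = j) :
    Measure.map (fun z : Fin I → X => fun j => z (rep j))
        ((M I).restrict {z | (∀ k l, c k = c l → z k = z l) ∧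
          Function.Injective fun j => z (rep j)})
        {y : Fin n → X | (∀ j, y j ∈ Λ) ∧ Function.Injective y}
      ≤ (n ! : ℝ≥0∞) * (((i + 1)! : ℝ≥0∞) * (C : ℝ≥0∞) ^ (n + i)) := by
  set j₀ : Fin n := ⟨0, hn⟩
  set B₀ := Finset.univ.filter fun k => c k = j₀
  have hB₀ : B₀.card = i + 1 := by rw [hfib, he]; simp
  have hsingle : ∀ j ≠ j₀, (Finset.univ.filter fun k => c k = j).card = 1 := fun j hj => by
    rw [hfib, he]; simp [hj]
  have hIn : I = n + i := by
    rw [hI, he, Finset.sum_ite]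
    simp only [Finset.filter_eq', Finset.filter_ne', Finset.mem_univ, ↓reduceIte,
      Finset.sum_const, Finset.card_singleton, Finset.card_erase_of_mem, Finset.card_univ,
      Fintype.card_fin, smul_eq_mul, one_mul, mul_one]
    omega
  have hΛm : MeasurableSet Λ := hΛ.isClosed.measurableSet
  refine (map_restrict_fiberConst_le_restrict_diagonalStratum (M I) hΛm hrep hsingle).trans ?_
  set ν := (M I).restrict {z | ∀ j, z j ∈ Λ}
  have hν : ν univ ≤ C ^ I * I ! := by rw [Measure.restrict_apply_univ]; exact hC1 I
  rcases Nat.eq_zero_or_pos i with rfl | hi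
  · calc ν (diagonalStratum B₀) ≤ ν univ := measure_mono (subset_univ _)
      _ ≤ _ := hν.trans (by rw [hIn]; simp [mul_comm])
  · apply ENNReal.le_factorial_mul_of_choose_mul_le hn
    have hexch := map_comp_perm_restrict_eq hΛm ((hC1 I).trans_lt (by finiteness)).ne
      fun σ A hA => measure_setOf_forall_comp_perm_mem_of_moment (hmom I) σ hA
    simpa [← hIn, ← hB₀] using (choose_mul_measure_diagonalStratum_le hexch (by omega)).trans hν

/-- If `μ` is a random discrete measure on `X` (a probability measure concentrated on discrete
measures `∑ s_a δ_{x_a}`) whose moment measures `M m` satisfy (C1), i.e.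
`M m (Λ^m) ≤ C_Λ^m m!` for compact `Λ`, then for every `i` and `n ≥ 1`,
`(1/n!) M_{i+1,1,...,1}(Λ^{(n)}_{0̂}) ≤ (i+1)! C_Λ^{n+i}`.  The stratum measure
`M_{i+1,1,...,1}` is obtained by restricting `M I` (`I = (i+1) + 1 + ... + 1`) to the
diagonal stratum given by the interval partition with block sizes `(i+1, 1, ..., 1)` —
encoded by the monotone map `c` with fiber cardinalities `e j` and section `rep` — and
pushing forward under the block-value map. -/
theorem random_discrete_measure_stratum_bound
    {X : Type*} [TopologicalSpace X] [PolishSpace X] [MeasurableSpace X] [BorelSpace X]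
    (μ : Measure (Measure X)) [IsProbabilityMeasure μ]
    (hdisc : ∀ᵐ η ∂μ, ∃ (s : ℕ → ℝ≥0∞) (x : ℕ → X),
      η = Measure.sum fun a => s a • Measure.dirac (x a))
    (M : (m : ℕ) → Measure (Fin m → X))
    (hmom : ∀ (m : ℕ) (A : Fin m → Set X), (∀ j, MeasurableSet (A j)) →
      M m {z | ∀ j, z j ∈ A j} = ∫⁻ η, ∏ j, η (A j) ∂μ)
    (Λ : Set X) (hΛ : IsCompact Λ) (C : ℝ≥0)
    (hC1 : ∀ m : ℕ, M m {z | ∀ j, z j ∈ Λ} ≤ (C : ℝ≥0∞) ^ m * (m ! : ℝ≥0∞))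
    (i n : ℕ) (hn : 0 < n) (e : Fin n → ℕ)
    (he : e = fun j => if j = ⟨0, hn⟩ then i + 1 else 1)
    (I : ℕ) (hI : I = ∑ j, e j)
    (c : Fin I → Fin n) (rep : Fin n → Fin I) (hmono : Monotone c)
    (hfib : ∀ j, (Finset.univ.filter fun k => c k = j).card = e j)
    (hrep : ∀ j, c (rep j) = j) :
    Measure.map (fun z : Fin I → X => fun j => z (rep j))
        ((M I).restrict {z | (∀ k l, c k = c l → z k = z l) ∧
          Function.Injective fun j => z (rep j)})
        {y : Fin n → X | (∀ j, y j ∈ Λ) ∧ Function.Injective y}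
      ≤ (n ! : ℝ≥0∞) * (((i + 1)! : ℝ≥0∞) * (C : ℝ≥0∞) ^ (n + i)) :=
  random_discrete_measure_stratum_bound_general μ M hmom Λ hΛ C hC1 i n hn e he I hI c rep hfib hrep
end
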